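/- arXiv:1105.3913 — 3 statements merged into one kernel-verified Lean document; each statement's English description precedes it below -/
import Mathlib

section
/- Let A ≥ 0, B ≥ 0 with either B ≥ 1, or 0 ≤ B < 1 and 27A ≥ (1-B)³. Then the function h(u) = (1-u)(A + Bu + u²)/u is monotone non-increasing on (0, ∞). -/
/-!
For `x < y` one has `h x - h y = (y - x) * (A + x*y*(x + y) - (1 - B)*x*y) / (x*y)`, so it suffices
that `(1 - B) x y ≤ A + x y (x + y)`. With `c = 1 - B` this is clear when `x + y ≥ c`; otherwise
`z = c - x - y > 0` and AM-GM gives `c x y - x y (x + y) = x y z ≤ (c / 3)^3 ≤ A`.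
-/

lemma mul_mul_le_add_add_div_three_pow {x y z : ℝ} (hx : 0 ≤ x) (hy : 0 ≤ y) (hz : 0 ≤ z) :
    x * y * z ≤ ((x + y + z) / 3) ^ 3 := by
  nlinarith [mul_nonneg (add_nonneg (add_nonneg hx hy) hz) (sq_nonneg (x - y)),
    mul_nonneg (add_nonneg (add_nonneg hx hy) hz) (sq_nonneg (y - z)),
    mul_nonneg (add_nonneg (add_nonneg hx hy) hz) (sq_nonneg (z - x)),
    mul_nonneg hx (sq_nonneg (y - z)), mul_nonneg hy (sq_nonneg (z - x)),
    mul_nonneg hz (sq_nonneg (x - y))]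

lemma mul_mul_le_add_mul_mul_add {A c x y : ℝ} (hA : 0 ≤ A) (hc : c ^ 3 ≤ 27 * A)
    (hx : 0 < x) (hy : 0 < y) : c * (x * y) ≤ A + x * y * (x + y) := by
  have hxy : 0 < x * y := mul_pos hx hy
  rcases le_or_gt c (x + y) with hs | hs
  · nlinarith
  · have amgm := mul_mul_le_add_add_div_three_pow hx.le hy.le (sub_nonneg.2 hs.le)
    have hsum : x + y + (c - (x + y)) = c := by ring
    rw [hsum] at amgm
    nlinarith

lemma sub_eq_mul_div_of_ne_zero {A B x y : ℝ} (hx : x ≠ 0) (hy : y ≠ 0) :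
    (1 - x) * (A + B * x + x ^ 2) / x - (1 - y) * (A + B * y + y ^ 2) / y
      = (y - x) * (A + x * y * (x + y) - (1 - B) * (x * y)) / (x * y) := by
  field_simp
  ring

theorem stmt4_general (A B : ℝ) (hA : 0 ≤ A)
    (hcase : 1 ≤ B ∨ (B < 1 ∧ (1 - B) ^ 3 ≤ 27 * A))
    (h : ℝ → ℝ) (hh : ∀ u, h u = (1 - u) * (A + B * u + u ^ 2) / u) :
    AntitoneOn h (Set.Ioi (0 : ℝ)) := by
  have hc : (1 - B) ^ 3 ≤ 27 * A := by
    rcases hcase with hB | ⟨-, hAB⟩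
    · exact (Odd.pow_nonpos (by decide) (by linarith)).trans (by positivity)
    · exact hAB
  intro x (hx : 0 < x) y (hy : 0 < y) hxy
  have key := mul_mul_le_add_mul_mul_add hA hc hx hy
  rw [hh, hh, ← sub_nonneg, sub_eq_mul_div_of_ne_zero hx.ne' hy.ne']
  exact div_nonneg (mul_nonneg (sub_nonneg.2 hxy) (by linarith)) (mul_pos hx hy).le

/-- If `B ≥ 1`, or `0 ≤ B < 1` and `27A ≥ (1-B)^3`, then
`h(u) = (1-u)(A+Bu+u²)/u` is monotone non-increasing on `(0,∞)`. -/
theorem stmt4 (A B : ℝ) (hA : 0 ≤ A) (hB : 0 ≤ B)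
    (hcase : 1 ≤ B ∨ (B < 1 ∧ (1 - B) ^ 3 ≤ 27 * A))
    (h : ℝ → ℝ) (hh : ∀ u, h u = (1 - u) * (A + B * u + u ^ 2) / u) :
    AntitoneOn h (Set.Ioi (0 : ℝ)) :=
  stmt4_general A B hA hcase h hh
end

section
/- Let A ≥ 0, 0 ≤ B < 1, 27A < (1-B)³, and let α₁ < α₂ be the two positive roots of k(u) = -2u³ + (1-B)u² - A in (0,1). Let h(u) = (1-u)(A + Bu + u²)/u. Then h is strictly decreasing on (0, α₁) and on (α₂, 1), strictly increasing on (α₁, α₂), h has a local minimum at α₁ and a local maximum at α₂, and there exists a unique u₀ ∈ (0, α₁) with h(u₀) = h(α₂). -/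
/-!
Expanding, `h u = A / u + (B - A) + (1 - B) u - u²`, so `h' = k / u²` and `h → +∞` as
`u → 0⁺`. Knowing two roots `α₁ ≠ α₂`, the cubic factors as
`k u = (u - α₁)(u - α₂)(1 - B - 2(α₁ + α₂ + u))`, and comparing constant terms gives
`α₁ α₂ (1 - B - 2(α₁ + α₂)) = -A < 0`; hence for `u > 0` the sign of `h'` is that of
`(u - α₁)(α₂ - u)`, which yields the monotonicity pattern and the local extrema. Since `h`
decreases from `+∞` to `h α₁ < h α₂` on `(0, α₁]`, the intermediate value theorem and strict
monotonicity give the unique `u₀`.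
-/

open Set Filter Topology

theorem strictMonoOn_of_hasDerivAt_pos {D : Set ℝ} (hD : Convex ℝ D) {f f' : ℝ → ℝ}
    (hf : ∀ x ∈ D, HasDerivAt f (f' x) x) (hf'₀ : ∀ x ∈ interior D, 0 < f' x) :
    StrictMonoOn f D :=
  strictMonoOn_of_hasDerivWithinAt_pos hD (fun x hx => (hf x hx).continuousAt.continuousWithinAt)
    (fun x hx => (hf x (interior_subset hx)).hasDerivWithinAt) hf'₀

theorem strictAntiOn_of_hasDerivAt_neg {D : Set ℝ} (hD : Convex ℝ D) {f f' : ℝ → ℝ}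
    (hf : ∀ x ∈ D, HasDerivAt f (f' x) x) (hf'₀ : ∀ x ∈ interior D, f' x < 0) :
    StrictAntiOn f D :=
  strictAntiOn_of_hasDerivWithinAt_neg hD (fun x hx => (hf x hx).continuousAt.continuousWithinAt)
    (fun x hx => (hf x (interior_subset hx)).hasDerivWithinAt) hf'₀

theorem existsUnique_mem_Ioo_eq_of_strictAntiOn {f : ℝ → ℝ} {l a y : ℝ} (hla : l < a)
    (hf : StrictAntiOn f (Ioc l a)) (hfc : ContinuousOn f (Ioc l a))
    (hlim : Tendsto f (𝓝[>] l) atTop) (hy : f a < y) :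
    ∃! u, u ∈ Ioo l a ∧ f u = y := by
  obtain ⟨ε, hyε, hε⟩ := ((hlim.eventually_gt_atTop y).and (Ioo_mem_nhdsGT hla)).exists
  obtain ⟨u, hu, rfl⟩ := intermediate_value_Ioo' hε.2.le
    (hfc.mono (Icc_subset_Ioc_iff hε.2.le |>.2 ⟨hε.1, le_rfl⟩)) ⟨hy, hyε⟩
  refine ⟨u, ⟨⟨hε.1.trans hu.1, hu.2⟩, rfl⟩, fun v ⟨hv, hvu⟩ => ?_⟩
  exact hf.injOn ⟨hv.1, hv.2.le⟩ ⟨hε.1.trans hu.1, hu.2.le⟩ hvu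

theorem strictAntiOn_strictMonoOn_strictAntiOn_of_hasDerivAt {f f' : ℝ → ℝ} {a b : ℝ}
    (ha : 0 < a) (hab : a < b) (hf : ∀ u, 0 < u → HasDerivAt f (f' u) u)
    (hf' : ∀ u, 0 < u → ∃ m > 0, f' u = (u - a) * (b - u) * m) :
    StrictAntiOn f (Ioc 0 a) ∧ StrictMonoOn f (Icc a b) ∧ StrictAntiOn f (Ici b) := by
  refine ⟨?_, ?_, ?_⟩
  · refine strictAntiOn_of_hasDerivAt_neg (convex_Ioc 0 a) (fun u hu => hf u hu.1) fun u hu => ?_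
    rw [interior_Ioc] at hu
    obtain ⟨m, hm, he⟩ := hf' u hu.1
    rw [he]
    exact mul_neg_of_neg_of_pos (mul_neg_of_neg_of_pos (by linarith [hu.2]) (by linarith [hu.2])) hm
  · refine strictMonoOn_of_hasDerivAt_pos (convex_Icc a b) (fun u hu => hf u (ha.trans_le hu.1))
      fun u hu => ?_
    rw [interior_Icc] at hu
    obtain ⟨m, hm, he⟩ := hf' u (ha.trans hu.1)
    rw [he]
    exact mul_pos (mul_pos (by linarith [hu.1]) (by linarith [hu.2])) hm
  · refine strictAntiOn_of_hasDerivAt_neg (convex_Ici b)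
      (fun u hu => hf u ((ha.trans hab).trans_le hu)) fun u hu => ?_
    rw [interior_Ici] at hu
    obtain ⟨m, hm, he⟩ := hf' u ((ha.trans hab).trans hu)
    rw [he]
    exact mul_neg_of_neg_of_pos (mul_neg_of_pos_of_neg (by linarith [hu.out])
      (by linarith [hu.out])) hm

theorem hasDerivAt_isocline (A B : ℝ) {u : ℝ} (hu : u ≠ 0) :
    HasDerivAt (fun u => (1 - u) * (A + B * u + u ^ 2) / u)
      ((-2 * u ^ 3 + (1 - B) * u ^ 2 - A) / u ^ 2) u := by
  have hnum : HasDerivAt (fun u => (1 - u) * (A + B * u + u ^ 2))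
      (-1 * (A + B * u + u ^ 2) + (1 - u) * (B + 2 * u)) u := by
    refine ((hasDerivAt_id u).const_sub 1).fun_mul ?_
    simpa using ((hasDerivAt_id u).const_mul B |>.const_add A).fun_add (hasDerivAt_pow 2 u)
  refine (hnum.fun_div (hasDerivAt_id u) hu).congr_deriv ?_
  simp only [id]
  field_simp
  ring

theorem tendsto_isocline_nhdsGT_zero {A : ℝ} (B : ℝ) (hA : 0 < A) :
    Tendsto (fun u => (1 - u) * (A + B * u + u ^ 2) / u) (𝓝[>] 0) atTop := by
  simp_rw [div_eq_mul_inv]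
  refine Tendsto.pos_mul_atTop (C := A) hA ?_ tendsto_inv_nhdsGT_zero
  exact tendsto_nhdsWithin_of_tendsto_nhds (Continuous.tendsto' (by fun_prop) _ _ (by ring))

theorem cubic_eq_mul_of_roots {A B a b : ℝ} (ha : -2 * a ^ 3 + (1 - B) * a ^ 2 - A = 0)
    (hb : -2 * b ^ 3 + (1 - B) * b ^ 2 - A = 0) (hab : a ≠ b) (u : ℝ) :
    -2 * u ^ 3 + (1 - B) * u ^ 2 - A = (u - a) * (u - b) * (1 - B - 2 * (a + b + u)) := by
  refine mul_left_cancel₀ (sub_ne_zero.2 hab) ?_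
  -- both sides differ by a polynomial of degree one in `u` vanishing at `a` and `b`
  linear_combination (u - b) * ha - (u - a) * hb

theorem exists_pos_cubic_div_sq_eq {A B a b u : ℝ} (hA : 0 < A) (ha₀ : 0 < a) (hb₀ : 0 < b)
    (hab : a ≠ b) (ha : -2 * a ^ 3 + (1 - B) * a ^ 2 - A = 0)
    (hb : -2 * b ^ 3 + (1 - B) * b ^ 2 - A = 0) (hu : 0 < u) :
    ∃ m > 0, (-2 * u ^ 3 + (1 - B) * u ^ 2 - A) / u ^ 2 = (u - a) * (b - u) * m := by
  have hconst : 1 - B - 2 * (a + b) < 0 := by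
    have h0 := cubic_eq_mul_of_roots ha hb hab 0
    nlinarith [mul_pos ha₀ hb₀]
  refine ⟨(2 * (a + b + u) - (1 - B)) / u ^ 2, div_pos (by linarith) (by positivity), ?_⟩
  rw [cubic_eq_mul_of_roots ha hb hab u]
  ring

theorem stmt5_general (A B : ℝ) (hA : 0 < A)
    (k h : ℝ → ℝ)
    (hk : ∀ u, k u = -2 * u ^ 3 + (1 - B) * u ^ 2 - A)
    (hh : ∀ u, h u = (1 - u) * (A + B * u + u ^ 2) / u)
    (α₁ α₂ : ℝ) (h1 : 0 < α₁) (h2 : α₁ < (1 - B) / 3) (h3 : (1 - B) / 3 < α₂)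
    (hr1 : k α₁ = 0) (hr2 : k α₂ = 0) :
    StrictAntiOn h (Set.Ioc 0 α₁) ∧
    StrictMonoOn h (Set.Icc α₁ α₂) ∧
    StrictAntiOn h (Set.Ico α₂ 1) ∧
    IsLocalMinOn h (Set.Ioi (0 : ℝ)) α₁ ∧
    IsLocalMaxOn h (Set.Ioi (0 : ℝ)) α₂ ∧
    (∃! u₀ : ℝ, u₀ ∈ Set.Ioo 0 α₁ ∧ h u₀ = h α₂) := by
  have h12 : α₁ < α₂ := h2.trans h3
  obtain rfl : h = _ := funext hh
  obtain ⟨hanti₁, hmono, hanti₂⟩ :=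
    strictAntiOn_strictMonoOn_strictAntiOn_of_hasDerivAt h1 h12
      (fun u hu => hasDerivAt_isocline A B hu.ne') fun u hu =>
        exists_pos_cubic_div_sq_eq hA h1 (h1.trans h12) h12.ne (hk α₁ ▸ hr1) (hk α₂ ▸ hr2) hu
  refine ⟨hanti₁, hmono, hanti₂.mono Ico_subset_Ici_self, ?_, ?_, ?_⟩
  · exact (isLocalMin_of_anti_mono h1 h12 hanti₁.antitoneOn
      (hmono.monotoneOn.mono Ico_subset_Icc_self)).on _
  · exact (isLocalMax_of_mono_anti h12 (lt_add_one α₂)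
      (hmono.monotoneOn.mono Ioc_subset_Icc_self) (hanti₂.antitoneOn.mono Ico_subset_Ici_self)).on _
  · exact existsUnique_mem_Ioo_eq_of_strictAntiOn h1 hanti₁
      (fun u hu => (hasDerivAt_isocline A B hu.1.ne').continuousAt.continuousWithinAt)
      (tendsto_isocline_nhdsGT_zero B hA) (hmono ⟨le_rfl, h12.le⟩ ⟨h12.le, le_rfl⟩ h12)

/-- Shape of the prey isocline `h` when `k` has two positive roots
`α₁ < α₂` in `(0,1)`: `h` is strictly decreasing on `(0,α₁]` and `[α₂,1)`,
strictly increasing on `[α₁,α₂]`, has a local minimum at `α₁`, a local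
maximum at `α₂`, and there is a unique `u₀ ∈ (0,α₁)` with `h u₀ = h α₂`. -/
theorem stmt5 (A B : ℝ) (hA : 0 < A) (hB0 : 0 ≤ B) (hB1 : B < 1)
    (hdisc : 27 * A < (1 - B) ^ 3)
    (k h : ℝ → ℝ)
    (hk : ∀ u, k u = -2 * u ^ 3 + (1 - B) * u ^ 2 - A)
    (hh : ∀ u, h u = (1 - u) * (A + B * u + u ^ 2) / u)
    (α₁ α₂ : ℝ) (h1 : 0 < α₁) (h2 : α₁ < (1 - B) / 3) (h3 : (1 - B) / 3 < α₂)
    (h4 : α₂ < 1) (hr1 : k α₁ = 0) (hr2 : k α₂ = 0) :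
    StrictAntiOn h (Set.Ioc 0 α₁) ∧
    StrictMonoOn h (Set.Icc α₁ α₂) ∧
    StrictAntiOn h (Set.Ico α₂ 1) ∧
    IsLocalMinOn h (Set.Ioi (0 : ℝ)) α₁ ∧
    IsLocalMaxOn h (Set.Ioi (0 : ℝ)) α₂ ∧
    (∃! u₀ : ℝ, u₀ ∈ Set.Ioo 0 α₁ ∧ h u₀ = h α₂) :=
  stmt5_general A B hA k h hk hh α₁ α₂ h1 h2 h3 hr1 hr2
end

section
/- Let δ₁ > 0, c > 0, ω_c = c - δ₁/c, and p(λ) = -λ³ + ω_c λ² + δ₁λ + K with K > 0. Then p has exactly one positive real root, and p(0) = K > 0. Moreover, if K is small enough that p(λ₋) < 0 where λ₋ = (ω_c - √(ω_c² + 3δ₁))/3, then p has two distinct negative real roots and one positive real root. -/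
/-!
Writing `p x = -x³ + ω x² + δ x + K`, for `x > 0` we have `p x / x² = -x + ω + δ / x + K / x²`,
which is strictly decreasing on `(0, ∞)` when `δ, K ≥ 0`; so `p` has at most one positive root,
and one exists by the intermediate value theorem since `p 0 = K > 0` and `p → -∞`.
The negative critical point `λ₋` is negative because `√(ω² + 3δ) > |ω|`, so `p λ₋ < 0`
together with `p 0 > 0` and `p → +∞` at `-∞` gives a root on each side of `λ₋`.
-/

open Set

namespace NegCubic

def eval (w d K x : ℝ) : ℝ := -x ^ 3 + w * x ^ 2 + d * x + K

variable {w d K : ℝ}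

lemma eval_zero : eval w d K 0 = K := by simp [eval]

lemma continuous_eval : Continuous (eval w d K) := by unfold eval; fun_prop

lemma eval_neg (x : ℝ) : eval w d K (-x) = -eval (-w) d (-K) x := by unfold eval; ring

def bound (w d K : ℝ) : ℝ := 1 + |w| + |d| + |K|

lemma one_le_bound : 1 ≤ bound w d K := by
  unfold bound; linarith [abs_nonneg w, abs_nonneg d, abs_nonneg K]

lemma eval_neg_of_bound_le {x : ℝ} (hx : bound w d K ≤ x) : eval w d K x < 0 := by
  have h1 : 1 ≤ x := one_le_bound.trans hx
  have hx0 : 0 < x := by linarith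
  have hxx : x ≤ x ^ 2 := by nlinarith
  have hw : w * x ^ 2 ≤ |w| * x ^ 2 := by gcongr; exact le_abs_self w
  have hd : d * x ≤ |d| * x ^ 2 := (mul_le_mul_of_nonneg_right (le_abs_self d) hx0.le).trans
    (by gcongr)
  have hK : K ≤ |K| * x ^ 2 := (le_abs_self K).trans (le_mul_of_one_le_right (abs_nonneg K)
    (by nlinarith))
  have hcoef : (|w| + |d| + |K|) * x ^ 2 ≤ (x - 1) * x ^ 2 := by
    gcongr; unfold bound at hx; linarith
  unfold eval
  nlinarith

lemma eval_pos_of_le_neg_bound {x : ℝ} (hx : x ≤ -bound w d K) : 0 < eval w d K x := by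
  have h := eval_neg_of_bound_le (w := -w) (K := -K) (d := d) (x := -x)
    (by simpa [bound, abs_neg] using neg_le_neg hx)
  rw [← neg_neg x, eval_neg]
  simpa using h

lemma eval_div_sq_strictAntiOn (hd : 0 ≤ d) (hK : 0 ≤ K) :
    StrictAntiOn (fun x => eval w d K x / x ^ 2) (Ioi 0) := by
  have hform : ∀ x : ℝ, 0 < x → eval w d K x / x ^ 2 = -x + w + d / x + K / x ^ 2 := by
    intro x hx
    unfold eval
    field_simp
  intro x hx y hy hxy
  simp only
  rw [hform x hx, hform y hy]
  have hdy : d / y ≤ d / x := div_le_div_of_nonneg_left hd hx hxy.le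
  have hKy : K / y ^ 2 ≤ K / x ^ 2 :=
    div_le_div_of_nonneg_left hK (pow_pos hx 2) (by gcongr; exact hx.le)
  linarith

theorem existsUnique_pos_root (hd : 0 ≤ d) (hK : 0 < K) :
    ∃! x : ℝ, 0 < x ∧ eval w d K x = 0 := by
  obtain ⟨x, hx, hroot⟩ : (0 : ℝ) ∈ eval w d K '' Ioo 0 (bound w d K) :=
    intermediate_value_Ioo' (zero_le_one.trans one_le_bound) continuous_eval.continuousOn
      ⟨eval_neg_of_bound_le le_rfl, eval_zero.symm ▸ hK⟩
  refine ⟨x, ⟨hx.1, hroot⟩, fun y ⟨hy, hyroot⟩ => ?_⟩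
  refine (eval_div_sq_strictAntiOn (w := w) hd hK.le).injOn hy hx.1 ?_
  simp only [hroot, hyroot, zero_div]

theorem exists_two_neg_roots_of_eval_neg (hK : 0 < K) {l : ℝ} (hl : l < 0)
    (hpl : eval w d K l < 0) :
    ∃ a b : ℝ, a < b ∧ b < 0 ∧ eval w d K a = 0 ∧ eval w d K b = 0 := by
  obtain ⟨a, ha, haroot⟩ : (0 : ℝ) ∈ eval w d K '' Ioo (l - bound w d K) l :=
    intermediate_value_Ioo' (by linarith [one_le_bound (w := w) (d := d) (K := K)])
      continuous_eval.continuousOn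
      ⟨hpl, eval_pos_of_le_neg_bound (by linarith)⟩
  obtain ⟨b, hb, hbroot⟩ : (0 : ℝ) ∈ eval w d K '' Ioo l 0 :=
    intermediate_value_Ioo hl.le continuous_eval.continuousOn ⟨hpl, eval_zero.symm ▸ hK⟩
  exact ⟨a, b, ha.2.trans hb.1, hb.2, haroot, hbroot⟩

end NegCubic

lemma sub_sqrt_sq_add_neg {w d : ℝ} (hd : 0 < d) : w - √(w ^ 2 + 3 * d) < 0 := by
  have : |w| < √(w ^ 2 + 3 * d) := by
    rw [← Real.sqrt_sq_eq_abs]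
    exact Real.sqrt_lt_sqrt (sq_nonneg w) (by linarith)
  linarith [le_abs_self w]

open NegCubic in
theorem stmt18_general (δ₁ c K : ℝ) (hδ₁ : 0 < δ₁) (hK : 0 < K) :
    let ωc := c - δ₁ / c
    let p : ℝ → ℝ := fun lam => -lam ^ 3 + ωc * lam ^ 2 + δ₁ * lam + K
    let lamm := (ωc - Real.sqrt (ωc ^ 2 + 3 * δ₁)) / 3
    (∃! lam : ℝ, 0 < lam ∧ p lam = 0) ∧ p 0 = K ∧
      (p lamm < 0 →
        ∃ a b : ℝ, a < b ∧ b < 0 ∧ p a = 0 ∧ p b = 0 ∧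
          ∃ lam : ℝ, 0 < lam ∧ p lam = 0) := by
  intro ωc p lamm
  have hpos : ∃! lam : ℝ, 0 < lam ∧ p lam = 0 := existsUnique_pos_root hδ₁.le hK
  refine ⟨hpos, eval_zero, fun hlamm => ?_⟩
  have hlamm_neg : lamm < 0 := div_neg_of_neg_of_pos (sub_sqrt_sq_add_neg hδ₁) three_pos
  obtain ⟨a, b, hab, hb, ha, hb'⟩ := exists_two_neg_roots_of_eval_neg hK hlamm_neg hlamm
  exact ⟨a, b, hab, hb, ha, hb', hpos.exists⟩

/-- Root structure of `p(λ) = -λ³ + ω_c λ² + δ₁λ + K` with `K > 0`: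
`p` has exactly one positive real root and `p(0) = K > 0`; if moreover
`p(λ₋) < 0` at the negative critical point `λ₋`, then `p` has two distinct
negative real roots. -/
theorem stmt18 (δ₁ c K : ℝ) (hδ₁ : 0 < δ₁) (hc : 0 < c) (hK : 0 < K) :
    let ωc := c - δ₁ / c
    let p : ℝ → ℝ := fun lam => -lam ^ 3 + ωc * lam ^ 2 + δ₁ * lam + K
    let lamm := (ωc - Real.sqrt (ωc ^ 2 + 3 * δ₁)) / 3
    (∃! lam : ℝ, 0 < lam ∧ p lam = 0) ∧ p 0 = K ∧
      (p lamm < 0 →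
        ∃ a b : ℝ, a < b ∧ b < 0 ∧ p a = 0 ∧ p b = 0 ∧
          ∃ lam : ℝ, 0 < lam ∧ p lam = 0) :=
  stmt18_general δ₁ c K hδ₁ hK
end
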